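/- arXiv:2510.03481 — 5 statements merged into one kernel-verified Lean document; each statement's English description precedes it below -/
import Mathlib

section
/- LP duality for the interval simplex: fix a finite set S, bounds ǏP, P̂ : S → ℝ with ǏP ≤ P̂, 0 ≤ ǏP, P̂ ≤ 1, ∑ ǏP ≤ 1 ≤ ∑ P̂ (so the polytope is nonempty), and a vector x : S → ℝ. Then a real number v satisfies v ≤ min over P in the polytope of ∑_{s'} P(s')·x(s') if and only if there exist û, ǔ : S → ℝ≥0 and λ ∈ ℝ such that λ − û(s') + ǔ(s') ≤ x(s') for all s', and v ≤ λ + ∑_{s'} (ǏP(s')·ǔ(s') − P̂(s')·û(s')). -/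
theorem interval_simplex_lp_duality
    (S : Type*) [Fintype S] (Pl Pu : S → ℝ) (x : S → ℝ) (v : ℝ)
    (hl : ∀ s', 0 ≤ Pl s') (hlu : ∀ s', Pl s' ≤ Pu s') (hu : ∀ s', Pu s' ≤ 1)
    (hsum_l : ∑ s', Pl s' ≤ 1) (hsum_u : 1 ≤ ∑ s', Pu s') :
    (∀ P : S → ℝ, (∀ s', Pl s' ≤ P s' ∧ P s' ≤ Pu s') → ∑ s', P s' = 1 →
        v ≤ ∑ s', P s' * x s') ↔
    (∃ uhat ucheck : S → ℝ, ∃ lam : ℝ,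
        (∀ s', 0 ≤ uhat s') ∧ (∀ s', 0 ≤ ucheck s') ∧
        (∀ s', lam - uhat s' + ucheck s' ≤ x s') ∧
        v ≤ lam + ∑ s', (Pl s' * ucheck s' - Pu s' * uhat s')) := by
  classical
  constructor
  · -- strong duality direction
    intro h
    have hne : Nonempty S := by
      by_contra hn
      rw [not_nonempty_iff] at hn
      have h0 : (∑ s', Pu s') = 0 := by simp
      linarith
    set B : ℝ → ℝ := fun t => ∑ s, if x s ≤ t then Pu s else Pl s with hBdef
    set T : Finset ℝ := (Finset.univ.image x).filter (fun t => 1 ≤ B t) with hTdef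
    obtain ⟨s₀, -, hs₀⟩ := Finset.exists_max_image (Finset.univ : Finset S) x
      ⟨Classical.arbitrary S, Finset.mem_univ _⟩
    have hBx0 : B (x s₀) = ∑ s, Pu s := by
      apply Finset.sum_congr rfl
      intro s _
      rw [if_pos (hs₀ s (Finset.mem_univ s))]
    have hTne : T.Nonempty := by
      refine ⟨x s₀, ?_⟩
      rw [hTdef, Finset.mem_filter]
      refine ⟨Finset.mem_image_of_mem x (Finset.mem_univ s₀), ?_⟩
      rw [hBx0]; exact hsum_u
    set lam : ℝ := T.min' hTne with hlamdef
    have hlam_mem := T.min'_mem hTne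
    have hBlam : 1 ≤ B lam := (Finset.mem_filter.mp hlam_mem).2
    set A : ℝ := ∑ s, if x s < lam then Pu s else Pl s with hAdef
    have hA1 : A ≤ 1 := by
      by_cases hc : ∃ s, x s < lam
      · obtain ⟨s₂, hs₂⟩ := hc
        obtain ⟨s₁, hs₁mem, hs₁⟩ := Finset.exists_max_image
          (Finset.univ.filter (fun s => x s < lam)) x
          ⟨s₂, by simp [hs₂]⟩
        rw [Finset.mem_filter] at hs₁mem
        have hlt : x s₁ < lam := hs₁mem.2
        have hAB : A = B (x s₁) := by
          apply Finset.sum_congr rfl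
          intro s _
          by_cases hs : x s < lam
          · rw [if_pos hs, if_pos (hs₁ s (by simp [hs]))]
          · rw [if_neg hs, if_neg]
            intro hle
            exact hs (lt_of_le_of_lt hle hlt)
        by_contra hA1'
        push_neg at hA1'
        have hmem : x s₁ ∈ T := by
          rw [hTdef, Finset.mem_filter]
          exact ⟨Finset.mem_image_of_mem x (Finset.mem_univ s₁), by rw [← hAB]; linarith⟩
        exact absurd (T.min'_le _ hmem) (not_le.mpr hlt)
      · push_neg at hc
        have : A = ∑ s, Pl s := by
          apply Finset.sum_congr rfl
          intro s _
          rw [if_neg (not_lt.mpr (hc s))]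
        rw [this]; exact hsum_l
    set D : ℝ := ∑ s, if x s = lam then Pu s - Pl s else 0 with hDdef
    have hBD : B lam = A + D := by
      rw [hBdef, hAdef, hDdef, ← Finset.sum_add_distrib]
      apply Finset.sum_congr rfl
      intro s _
      rcases lt_trichotomy (x s) lam with hs | hs | hs
      · rw [if_pos hs.le, if_pos hs, if_neg hs.ne]; ring
      · rw [if_pos hs.le, if_neg (by rw [hs]; exact lt_irrefl _), if_pos hs]; ring
      · rw [if_neg (not_le.mpr hs), if_neg (not_lt.mpr hs.le), if_neg hs.ne']; ring
    have hD0 : 0 ≤ D := by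
      apply Finset.sum_nonneg
      intro s _
      split
      · linarith [hlu s]
      · exact le_refl 0
    set θ : ℝ := if D = 0 then 0 else (1 - A) / D with hθdef
    have hθ0 : 0 ≤ θ := by
      rw [hθdef]; split
      · exact le_refl 0
      · have hDpos : 0 < D := lt_of_le_of_ne hD0 (Ne.symm (by assumption))
        exact div_nonneg (by linarith) hDpos.le
    have hθ1 : θ ≤ 1 := by
      rw [hθdef]; split
      · linarith
      · have hDpos : 0 < D := lt_of_le_of_ne hD0 (Ne.symm (by assumption))
        rw [div_le_one hDpos]
        have := hBlam; rw [hBD] at this; linarith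
    have hθD : θ * D = 1 - A := by
      rw [hθdef]; split
      · rename_i hD
        rw [hD] at hBD
        have := hBlam; rw [hBD] at this
        linarith [this]
      · rename_i hD
        field_simp
    set P : S → ℝ := fun s => if x s < lam then Pu s
      else if x s = lam then Pl s + θ * (Pu s - Pl s) else Pl s with hPdef
    have hPfeas : ∀ s, Pl s ≤ P s ∧ P s ≤ Pu s := by
      intro s
      rw [hPdef]
      dsimp only
      split
      · exact ⟨hlu s, le_refl _⟩
      · split
        · constructor
          · nlinarith [hlu s]
          · nlinarith [hlu s]
        · exact ⟨le_refl _, hlu s⟩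
    have hPsum : ∑ s, P s = 1 := by
      have hterm : ∀ s, P s = (if x s < lam then Pu s else Pl s)
          + θ * (if x s = lam then Pu s - Pl s else 0) := by
        intro s
        rw [hPdef]
        dsimp only
        split_ifs with h1 h2 h2
        · exfalso; rw [h2] at h1; exact lt_irrefl _ h1
        · ring
        · ring
        · ring
      calc ∑ s, P s = ∑ s, ((if x s < lam then Pu s else Pl s)
              + θ * (if x s = lam then Pu s - Pl s else 0)) :=
            Finset.sum_congr rfl (fun s _ => hterm s)
        _ = A + θ * D := by
            rw [Finset.sum_add_distrib, ← Finset.mul_sum, ← hAdef, ← hDdef]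
        _ = 1 := by rw [hθD]; ring
    refine ⟨fun s => max (lam - x s) 0, fun s => max (x s - lam) 0, lam,
      fun s => le_max_right _ _, fun s => le_max_right _ _, ?_, ?_⟩
    · intro s
      show lam - max (lam - x s) 0 + max (x s - lam) 0 ≤ x s
      rcases le_total (x s) lam with hs | hs
      · rw [max_eq_left (by linarith), max_eq_right (by linarith)]; linarith
      · rw [max_eq_right (by linarith), max_eq_left (by linarith)]; linarith
    · have hv := h P hPfeas hPsum
      have hkey : ∑ s, P s * x s
          = lam + ∑ s, (Pl s * max (x s - lam) 0 - Pu s * max (lam - x s) 0) := by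
        have hterm : ∀ s, P s * x s
            = P s * lam + (Pl s * max (x s - lam) 0 - Pu s * max (lam - x s) 0) := by
          intro s
          rcases lt_trichotomy (x s) lam with hs | hs | hs
          · have e1 : max (x s - lam) 0 = 0 := max_eq_right (by linarith)
            have e2 : max (lam - x s) 0 = lam - x s := max_eq_left (by linarith)
            have e3 : P s = Pu s := by rw [hPdef]; dsimp only; rw [if_pos hs]
            rw [e1, e2, e3]; ring
          · have e1 : max (x s - lam) 0 = 0 := max_eq_right (by linarith)
            have e2 : max (lam - x s) 0 = 0 := max_eq_right (by linarith)
            rw [e1, e2, hs]; ring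
          · have e1 : max (x s - lam) 0 = x s - lam := max_eq_left (by linarith)
            have e2 : max (lam - x s) 0 = 0 := max_eq_right (by linarith)
            have e3 : P s = Pl s := by
              rw [hPdef]; dsimp only; rw [if_neg (not_lt.mpr hs.le), if_neg hs.ne']
            rw [e1, e2, e3]; ring
        calc ∑ s, P s * x s
            = ∑ s, (P s * lam + (Pl s * max (x s - lam) 0 - Pu s * max (lam - x s) 0)) :=
              Finset.sum_congr rfl (fun s _ => hterm s)
          _ = (∑ s, P s) * lam + ∑ s, (Pl s * max (x s - lam) 0 - Pu s * max (lam - x s) 0) := by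
              rw [Finset.sum_add_distrib, ← Finset.sum_mul]
          _ = lam + ∑ s, (Pl s * max (x s - lam) 0 - Pu s * max (lam - x s) 0) := by
              rw [hPsum]; ring
      linarith [hkey ▸ hv]
  · -- weak duality direction
    rintro ⟨uhat, ucheck, lam, h1, h2, h3, h4⟩ P hP hPsum
    have step1 : ∑ s, (Pl s * ucheck s - Pu s * uhat s)
        ≤ ∑ s, (P s * ucheck s - P s * uhat s) := by
      apply Finset.sum_le_sum
      intro s _
      have := (hP s).1
      have := (hP s).2
      have := h1 s
      have := h2 s
      nlinarith
    have step2 : ∑ s, (P s * ucheck s - P s * uhat s)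
        = (∑ s, P s * (lam - uhat s + ucheck s)) - lam := by
      have : ∀ s, P s * ucheck s - P s * uhat s
          = P s * (lam - uhat s + ucheck s) - P s * lam := by
        intro s; ring
      rw [Finset.sum_congr rfl (fun s _ => this s), Finset.sum_sub_distrib,
        ← Finset.sum_mul, hPsum]
      ring
    have step3 : ∑ s, P s * (lam - uhat s + ucheck s) ≤ ∑ s, P s * x s := by
      apply Finset.sum_le_sum
      intro s _
      have hP0 : 0 ≤ P s := le_trans (hl s) (hP s).1
      exact mul_le_mul_of_nonneg_left (h3 s) hP0
    linarith
end

section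
/- Extreme points of an interval probability polytope push all but at most one coordinate to an interval bound: if P is an extreme point of 𝒫 = {P : S → ℝ | ǏP ≤ P ≤ P̂, ∑ P = 1} (S finite), then there is at most one s' ∈ S with ǏP(s') < P(s') < P̂(s'). -/
theorem extreme_point_at_most_one_free_coordinate
    (S : Type*) [Fintype S] (Pl Pu : S → ℝ) (hlu : ∀ s', Pl s' ≤ Pu s')
    (P : S → ℝ)
    (hP : P ∈ Set.extremePoints ℝ
        {Q : S → ℝ | (∀ s', Pl s' ≤ Q s' ∧ Q s' ≤ Pu s') ∧ ∑ s', Q s' = 1}) :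
    {s' : S | Pl s' < P s' ∧ P s' < Pu s'}.Subsingleton := by
  classical
  intro a ha b hb
  by_contra hab
  obtain ⟨hPmem, hext⟩ := hP
  obtain ⟨hPl, hsum⟩ := hPmem
  set ε : ℝ := min (min (P a - Pl a) (Pu a - P a)) (min (P b - Pl b) (Pu b - P b))
    with hε
  have hεpos : 0 < ε := by
    apply lt_min <;> apply lt_min <;> simp only [sub_pos]
    · exact ha.1
    · exact ha.2
    · exact hb.1
    · exact hb.2
  have hεa1 : ε ≤ P a - Pl a := le_trans (min_le_left _ _) (min_le_left _ _)
  have hεa2 : ε ≤ Pu a - P a := le_trans (min_le_left _ _) (min_le_right _ _)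
  have hεb1 : ε ≤ P b - Pl b := le_trans (min_le_right _ _) (min_le_left _ _)
  have hεb2 : ε ≤ Pu b - P b := le_trans (min_le_right _ _) (min_le_right _ _)
  set d : S → ℝ := fun s => (if s = a then ε else 0) - (if s = b then ε else 0) with hd
  have hda : d a = ε := by simp [hd, hab]
  have hdsum : ∑ s, d s = 0 := by
    simp [hd, Finset.sum_sub_distrib]
  have hbounds : ∀ (c : ℝ), |c| ≤ 1 → ∀ s, Pl s ≤ P s + c * d s ∧ P s + c * d s ≤ Pu s := by
    intro c hc s
    obtain ⟨hc1, hc2⟩ := abs_le.mp hc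
    by_cases h1 : s = a
    · subst h1
      have hds : d s = ε := hda
      rw [hds]
      constructor <;> nlinarith
    · by_cases h2 : s = b
      · subst h2
        have hds : d s = -ε := by simp [hd, Ne.symm hab]
        rw [hds]
        constructor <;> nlinarith
      · have hds : d s = 0 := by simp [hd, h1, h2]
        rw [hds]
        simpa using hPl s
  have hQsum : ∀ (c : ℝ), ∑ s, (P s + c * d s) = 1 := by
    intro c
    rw [Finset.sum_add_distrib, ← Finset.mul_sum, hdsum, hsum]
    ring
  have hQ1 : (fun s => P s + d s) ∈
      {Q : S → ℝ | (∀ s', Pl s' ≤ Q s' ∧ Q s' ≤ Pu s') ∧ ∑ s', Q s' = 1} := by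
    refine ⟨fun s => ?_, by simpa using hQsum 1⟩
    simpa using hbounds 1 (by norm_num) s
  have hQ2 : (fun s => P s - d s) ∈
      {Q : S → ℝ | (∀ s', Pl s' ≤ Q s' ∧ Q s' ≤ Pu s') ∧ ∑ s', Q s' = 1} := by
    refine ⟨fun s => ?_, ?_⟩
    · have h := hbounds (-1) (by norm_num) s
      simp only []
      constructor
      · have := h.1; linarith
      · have := h.2; linarith
    · have := hQsum (-1)
      simp only [neg_one_mul] at this
      simpa [sub_eq_add_neg] using this
  have hseg : P ∈ openSegment ℝ (fun s => P s + d s) (fun s => P s - d s) := by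
    refine ⟨1/2, 1/2, by norm_num, by norm_num, by norm_num, ?_⟩
    funext s
    simp only [Pi.add_apply, Pi.smul_apply, smul_eq_mul]
    ring
  have := hext hQ1 hQ2 hseg
  have h0 : P a + d a = P a := congrFun this a
  rw [hda] at h0
  linarith
end

section
/- Robust value as minimum over compliant strategies: for a finite MDP with fixed transition function P and a multi-strategy θ with nonempty values, define for each state s the value x̄(s) as the least fixed point (in [0,1]^S) of the Bellman operator (Fx)(s) = 1 for s ∈ T and (Fx)(s) = min_{a∈θ(s)} ∑_{s'} P(s,a,s')·x(s') otherwise. Then x̄(s) equals the infimum over deterministic memoryless strategies σ compliant with θ of the probability of reaching T from s under σ and P, and this infimum is attained by some compliant strategy. -/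
/-- `x` is the least fixed point in `[0,1]^S` of the operator `G`. -/
def IsLeastFixedPoint {S : Type*} (G : (S → ℝ) → (S → ℝ)) (x : S → ℝ) : Prop :=
  (∀ s, x s ∈ Set.Icc (0 : ℝ) 1) ∧ G x = x ∧
  ∀ y : S → ℝ, (∀ s, y s ∈ Set.Icc (0 : ℝ) 1) → G y = y → ∀ s, x s ≤ y s

/-- Bellman operator for minimum reachability under a multi-strategy `θ`
with fixed transition function `P`. -/
noncomputable def minBellman {S A : Type*} [Fintype S]
    (T : Set S) [DecidablePred (· ∈ T)]
    (P : S → A → S → ℝ) (θ : S → Finset A) (hθ : ∀ s, (θ s).Nonempty)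
    (x : S → ℝ) (s : S) : ℝ :=
  if s ∈ T then 1 else (θ s).inf' (hθ s) fun a => ∑ s', P s a s' * x s'

/-- Bellman operator for reachability under a single strategy `σ`. -/
noncomputable def stratBellman {S A : Type*} [Fintype S]
    (T : Set S) [DecidablePred (· ∈ T)]
    (P : S → A → S → ℝ) (σ : S → A) (x : S → ℝ) (s : S) : ℝ :=
  if s ∈ T then 1 else ∑ s', P s (σ s) s' * x s'

/-- A least fixed point in the cube is below any pre-fixed point in the cube,
for a monotone cube-preserving operator. -/
lemma least_fp_le_prefixed {S : Type*} (G : (S → ℝ) → (S → ℝ))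
    (hmono : ∀ u v : S → ℝ, (∀ s, u s ∈ Set.Icc (0:ℝ) 1) → (∀ s, v s ∈ Set.Icc (0:ℝ) 1) →
      (∀ s, u s ≤ v s) → ∀ s, G u s ≤ G v s)
    (hmaps : ∀ u : S → ℝ, (∀ s, u s ∈ Set.Icc (0:ℝ) 1) → ∀ s, G u s ∈ Set.Icc (0:ℝ) 1)
    (x : S → ℝ) (hx : IsLeastFixedPoint G x)
    (y : S → ℝ) (hy : ∀ s, y s ∈ Set.Icc (0:ℝ) 1) (hGy : ∀ s, G y s ≤ y s) :
    ∀ s, x s ≤ y s := by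
  set Pre : (S → ℝ) → Prop :=
    fun w => (∀ s, w s ∈ Set.Icc (0:ℝ) 1) ∧ ∀ s, G w s ≤ w s with hPre
  set z : S → ℝ := fun s => sInf {t | ∃ w, Pre w ∧ w s = t} with hzdef
  have hyPre : Pre y := ⟨hy, hGy⟩
  have hne : ∀ s, ({t | ∃ w, Pre w ∧ w s = t}).Nonempty := fun s => ⟨y s, y, hyPre, rfl⟩
  have hbdd : ∀ s, BddBelow {t | ∃ w, Pre w ∧ w s = t} := by
    intro s
    refine ⟨0, ?_⟩
    rintro t ⟨w, hw, rfl⟩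
    exact (hw.1 s).1
  have hz_le : ∀ w, Pre w → ∀ s, z s ≤ w s := fun w hw s =>
    csInf_le (hbdd s) ⟨w, hw, rfl⟩
  have hz0 : ∀ s, 0 ≤ z s := by
    intro s
    refine le_csInf (hne s) ?_
    rintro t ⟨w, hw, rfl⟩
    exact (hw.1 s).1
  have hzIcc : ∀ s, z s ∈ Set.Icc (0:ℝ) 1 :=
    fun s => ⟨hz0 s, (hz_le y hyPre s).trans (hy s).2⟩
  have hGz : ∀ s, G z s ≤ z s := by
    intro s
    refine le_csInf (hne s) ?_
    rintro t ⟨w, hw, rfl⟩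
    exact (hmono z w hzIcc hw.1 (hz_le w hw) s).trans (hw.2 s)
  have hGzPre : Pre (G z) :=
    ⟨hmaps z hzIcc, fun s => hmono (G z) z (hmaps z hzIcc) hzIcc hGz s⟩
  have hfix : G z = z := funext fun s => le_antisymm (hGz s) (hz_le (G z) hGzPre s)
  intro s
  exact (hx.2.2 z hzIcc hfix s).trans (hz_le y hyPre s)

theorem robust_value_is_min_over_compliant
    {S A : Type*} [Fintype S] [Fintype A]
    (T : Set S) [DecidablePred (· ∈ T)]
    (P : S → A → S → ℝ)
    (hP : ∀ s a, (∀ s', 0 ≤ P s a s') ∧ ∑ s', P s a s' = 1)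
    (θ : S → Finset A) (hθ : ∀ s, (θ s).Nonempty)
    (xbar : S → ℝ) (hxbar : IsLeastFixedPoint (minBellman T P θ hθ) xbar)
    (reach : (S → A) → S → ℝ)
    (hreach : ∀ σ : S → A, (∀ s, σ s ∈ θ s) →
        IsLeastFixedPoint (stratBellman T P σ) (reach σ)) :
    (∀ σ : S → A, (∀ s, σ s ∈ θ s) → ∀ s, xbar s ≤ reach σ s) ∧
    (∃ σ : S → A, (∀ s, σ s ∈ θ s) ∧ ∀ s, reach σ s = xbar s) := by
  -- basic facts about sums
  have hsum_mono : ∀ (s : S) (a : A) (u v : S → ℝ), (∀ s', u s' ≤ v s') →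
      ∑ s', P s a s' * u s' ≤ ∑ s', P s a s' * v s' := by
    intro s a u v huv
    exact Finset.sum_le_sum fun s' _ => mul_le_mul_of_nonneg_left (huv s') ((hP s a).1 s')
  have hsum_Icc : ∀ (s : S) (a : A) (u : S → ℝ), (∀ s', u s' ∈ Set.Icc (0:ℝ) 1) →
      (∑ s', P s a s' * u s') ∈ Set.Icc (0:ℝ) 1 := by
    intro s a u hu
    constructor
    · exact Finset.sum_nonneg fun s' _ => mul_nonneg ((hP s a).1 s') (hu s').1
    · calc ∑ s', P s a s' * u s' ≤ ∑ s', P s a s' * 1 :=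
            Finset.sum_le_sum fun s' _ =>
              mul_le_mul_of_nonneg_left (hu s').2 ((hP s a).1 s')
        _ = 1 := by simp [(hP s a).2]
  -- monotonicity of minBellman
  have hmono : ∀ u v : S → ℝ, (∀ s, u s ∈ Set.Icc (0:ℝ) 1) → (∀ s, v s ∈ Set.Icc (0:ℝ) 1) →
      (∀ s, u s ≤ v s) → ∀ s, minBellman T P θ hθ u s ≤ minBellman T P θ hθ v s := by
    intro u v _ _ huv s
    unfold minBellman
    split
    · exact le_rfl
    · refine Finset.le_inf' _ _ fun a ha => ?_
      exact (Finset.inf'_le _ ha).trans (hsum_mono s a u v huv)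
  -- minBellman maps the cube into itself
  have hmaps : ∀ u : S → ℝ, (∀ s, u s ∈ Set.Icc (0:ℝ) 1) →
      ∀ s, minBellman T P θ hθ u s ∈ Set.Icc (0:ℝ) 1 := by
    intro u hu s
    unfold minBellman
    split
    · exact ⟨zero_le_one, le_rfl⟩
    · constructor
      · exact Finset.le_inf' _ _ fun a _ => (hsum_Icc s a u hu).1
      · exact (Finset.inf'_le _ (hθ s).choose_spec).trans (hsum_Icc s (hθ s).choose u hu).2
  -- Part 1
  have part1 : ∀ σ : S → A, (∀ s, σ s ∈ θ s) → ∀ s, xbar s ≤ reach σ s := by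
    intro σ hσ
    have hr := hreach σ hσ
    refine least_fp_le_prefixed _ hmono hmaps xbar hxbar (reach σ) hr.1 ?_
    intro s
    have : minBellman T P θ hθ (reach σ) s ≤ stratBellman T P σ (reach σ) s := by
      unfold minBellman stratBellman
      split
      · exact le_rfl
      · exact Finset.inf'_le _ (hσ s)
    calc minBellman T P θ hθ (reach σ) s ≤ stratBellman T P σ (reach σ) s := this
      _ = reach σ s := by rw [hr.2.1]
  refine ⟨part1, ?_⟩
  -- choose an optimal strategy
  choose σ hσmem hσmin using fun s =>
    (θ s).exists_min_image (fun a => ∑ s', P s a s' * xbar s') (hθ s)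
  have hfix : stratBellman T P σ xbar = xbar := by
    have : stratBellman T P σ xbar = minBellman T P θ hθ xbar := by
      funext s
      unfold minBellman stratBellman
      split
      · rfl
      · exact le_antisymm (Finset.le_inf' _ _ fun a ha => hσmin s a ha)
          (Finset.inf'_le _ (hσmem s))
    rw [this, hxbar.2.1]
  refine ⟨σ, hσmem, fun s => le_antisymm ?_ (part1 σ hσmem s)⟩
  exact (hreach σ hσmem).2.2 xbar hxbar.1 hfix s
end

section
/- The number of extreme points of an interval probability polytope on n successor states is at most 2·n·2^(n−1) (in particular, finite but can be exponential in n), and when all intervals are nondegenerate and the polytope is full-dimensional in the simplex, the number of vertices can be as large as exponential in n. -/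
open Set

/-- An extreme point of the interval polytope has at most one coordinate strictly
between its bounds. -/
private lemma extreme_unique_free {n : ℕ} (Pl Pu : Fin n → ℝ)
    {P : Fin n → ℝ}
    (hP : P ∈ Set.extremePoints ℝ
      {Q : Fin n → ℝ | (∀ i, Pl i ≤ Q i ∧ Q i ≤ Pu i) ∧ ∑ i, Q i = 1})
    {i j : Fin n} (hij : i ≠ j)
    (hi1 : Pl i < P i) (hi2 : P i < Pu i)
    (hj1 : Pl j < P j) (hj2 : P j < Pu j) : False := by
  rw [mem_extremePoints] at hP
  obtain ⟨⟨hb, hs⟩, hext⟩ := hP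
  set ε : ℝ := min (min (P i - Pl i) (Pu i - P i)) (min (P j - Pl j) (Pu j - P j)) with hε
  have hε0 : 0 < ε := by
    simp only [hε, lt_min_iff]
    refine ⟨⟨by linarith, by linarith⟩, by linarith, by linarith⟩
  have hεi1 : ε ≤ P i - Pl i := (min_le_left _ _).trans (min_le_left _ _)
  have hεi2 : ε ≤ Pu i - P i := (min_le_left _ _).trans (min_le_right _ _)
  have hεj1 : ε ≤ P j - Pl j := (min_le_right _ _).trans (min_le_left _ _)
  have hεj2 : ε ≤ Pu j - P j := (min_le_right _ _).trans (min_le_right _ _)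
  set Q : Fin n → ℝ := fun k => P k + (if k = i then ε else 0) - (if k = j then ε else 0)
    with hQ
  set R : Fin n → ℝ := fun k => P k - (if k = i then ε else 0) + (if k = j then ε else 0)
    with hR
  have hsumQ : ∑ k, Q k = 1 := by
    have : ∑ k, Q k = (∑ k, P k) + ε - ε := by
      simp [hQ, Finset.sum_add_distrib, Finset.sum_sub_distrib, Finset.sum_ite_eq']
    rw [this, hs]; ring
  have hsumR : ∑ k, R k = 1 := by
    have : ∑ k, R k = (∑ k, P k) - ε + ε := by
      simp [hR, Finset.sum_add_distrib, Finset.sum_sub_distrib, Finset.sum_ite_eq']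
    rw [this, hs]; ring
  have hQmem : Q ∈ {Q : Fin n → ℝ | (∀ i, Pl i ≤ Q i ∧ Q i ≤ Pu i) ∧ ∑ i, Q i = 1} := by
    refine ⟨fun k => ?_, hsumQ⟩
    by_cases hk : k = i
    · subst hk
      simp only [hQ, eq_self_iff_true, if_true, if_neg hij]
      constructor <;> [linarith; linarith]
    · by_cases hk' : k = j
      · subst hk'
        simp only [hQ, if_neg hk, eq_self_iff_true, if_true]
        constructor <;> [linarith; linarith]
      · simp only [hQ, if_neg hk, if_neg hk']
        have := hb k
        constructor <;> [linarith; linarith]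
  have hRmem : R ∈ {Q : Fin n → ℝ | (∀ i, Pl i ≤ Q i ∧ Q i ≤ Pu i) ∧ ∑ i, Q i = 1} := by
    refine ⟨fun k => ?_, hsumR⟩
    by_cases hk : k = i
    · subst hk
      simp only [hR, eq_self_iff_true, if_true, if_neg hij]
      constructor <;> [linarith; linarith]
    · by_cases hk' : k = j
      · subst hk'
        simp only [hR, if_neg hk, eq_self_iff_true, if_true]
        constructor <;> [linarith; linarith]
      · simp only [hR, if_neg hk, if_neg hk']
        have := hb k
        constructor <;> [linarith; linarith]
  have hseg : P ∈ openSegment ℝ Q R := by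
    refine ⟨1/2, 1/2, by norm_num, by norm_num, by norm_num, ?_⟩
    funext k
    simp only [hQ, hR, Pi.add_apply, Pi.smul_apply, smul_eq_mul]
    ring
  have hQeq : Q = P := (hext Q hQmem R hRmem hseg).1
  have : Q i = P i := congrFun hQeq i
  simp only [hQ, eq_self_iff_true, if_true, if_neg hij] at this
  linarith

theorem interval_polytope_extreme_points_card_bound
    (n : ℕ) (Pl Pu : Fin n → ℝ) (hlu : ∀ i, Pl i < Pu i)
    (Poly : Set (Fin n → ℝ))
    (hPoly : Poly = {P : Fin n → ℝ | (∀ i, Pl i ≤ P i ∧ P i ≤ Pu i) ∧ ∑ i, P i = 1}) :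
    (Set.extremePoints ℝ Poly).Finite ∧
    (Set.extremePoints ℝ Poly).ncard ≤ n * 2 ^ (n - 1) := by
  classical
  subst hPoly
  cases n with
  | zero =>
    have hempty : {P : Fin 0 → ℝ | (∀ i, Pl i ≤ P i ∧ P i ≤ Pu i) ∧ ∑ i, P i = 1}
        = (∅ : Set (Fin 0 → ℝ)) := by
      ext P
      simp
    rw [hempty]
    simp
  | succ m =>
    set S : Set (Fin (m + 1) → ℝ) :=
      {P | (∀ i, Pl i ≤ P i ∧ P i ≤ Pu i) ∧ ∑ i, P i = 1} with hS
    set E := Set.extremePoints ℝ S with hE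
    have key : ∀ P : Fin (m + 1) → ℝ, ∃ j : Fin (m + 1),
        P ∈ E → ∀ i, i ≠ j → ¬(Pl i < P i ∧ P i < Pu i) := by
      intro P
      by_cases h : ∃ i, Pl i < P i ∧ P i < Pu i
      · obtain ⟨j, hj⟩ := h
        exact ⟨j, fun hP i hij hi =>
          extreme_unique_free Pl Pu hP hij hi.1 hi.2 hj.1 hj.2⟩
      · exact ⟨0, fun _ i _ hi => h ⟨i, hi⟩⟩
    choose J hJ using key
    set Φ : (Fin (m + 1) → ℝ) → Fin (m + 1) × (Fin m → Bool) :=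
      fun P => (J P, fun k => decide (P ((J P).succAbove k) = Pu ((J P).succAbove k)))
      with hΦ
    have hinj : Set.InjOn Φ E := by
      intro P hP P' hP' hPP'
      have hj : J P = J P' := congrArg Prod.fst hPP'
      have hPS : P ∈ S := extremePoints_subset hP
      have hP'S : P' ∈ S := extremePoints_subset hP'
      obtain ⟨hbP, hsP⟩ := hPS
      obtain ⟨hbP', hsP'⟩ := hP'S
      set j := J P with hjdef
      have hfun : ∀ k : Fin m,
          (decide (P (j.succAbove k) = Pu (j.succAbove k)) : Bool)
            = decide (P' (j.succAbove k) = Pu (j.succAbove k)) := by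
        intro k
        have h2 := congrFun (congrArg Prod.snd hPP') k
        simpa only [hΦ, ← hj] using h2
      have hix : ∀ i : Fin (m + 1), i ≠ j → P i = P' i := by
        intro i hi
        have hnf := hJ P hP i hi
        have hnf' : ¬(Pl i < P' i ∧ P' i < Pu i) := by
          have := hJ P' hP' i (by rwa [← hj])
          exact this
        have h1 : P i = Pl i ∨ P i = Pu i := by
          have hb := hbP i
          by_contra hc
          push_neg at hc
          exact hnf ⟨lt_of_le_of_ne hb.1 (Ne.symm hc.1), lt_of_le_of_ne hb.2 hc.2⟩
        have h2 : P' i = Pl i ∨ P' i = Pu i := by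
          have hb := hbP' i
          by_contra hc
          push_neg at hc
          exact hnf' ⟨lt_of_le_of_ne hb.1 (Ne.symm hc.1), lt_of_le_of_ne hb.2 hc.2⟩
        obtain ⟨k, hk⟩ := Fin.exists_succAbove_eq hi
        have hd := hfun k
        rw [hk] at hd
        simp only [decide_eq_decide] at hd
        have hlt := hlu i
        rcases h1 with h1 | h1 <;> rcases h2 with h2 | h2
        · rw [h1, h2]
        · exfalso
          have : P i = Pu i := hd.mpr h2
          rw [h1] at this
          linarith
        · exfalso
          have : P' i = Pu i := hd.mp h1
          rw [h2] at this
          linarith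
        · rw [h1, h2]
      have hjj : P j = P' j := by
        have e1 := Fin.sum_univ_succAbove P j
        have e2 := Fin.sum_univ_succAbove P' j
        have e3 : ∑ k, P (j.succAbove k) = ∑ k, P' (j.succAbove k) :=
          Finset.sum_congr rfl fun k _ => hix _ (Fin.succAbove_ne j k)
        rw [hsP] at e1
        rw [hsP'] at e2
        linarith
      funext i
      by_cases h : i = j
      · rw [h]; exact hjj
      · exact hix i h
    have hfin : E.Finite := Set.Finite.of_finite_image (Set.toFinite _) hinj
    refine ⟨hfin, ?_⟩
    calc E.ncard = (Φ '' E).ncard := (Set.ncard_image_of_injOn hinj).symm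
      _ ≤ (Set.univ : Set (Fin (m + 1) × (Fin m → Bool))).ncard :=
          Set.ncard_le_ncard (Set.subset_univ _) Set.finite_univ
      _ = (m + 1) * 2 ^ m := by
          rw [Set.ncard_univ, Nat.card_eq_fintype_card]
          simp
      _ = (m + 1) * 2 ^ (m + 1 - 1) := by simp
end

section
/- Feasibility transfer for the dualization encoding (completeness direction): suppose x : S → ℝ satisfies the robust inequality x(s) ≤ inf_{P ∈ 𝒫(s,a)} ∑_{s'} P(s')·x(s') for a nonempty interval polytope 𝒫(s,a) whose minimum is attained. Then there exist dual witnesses û, ǔ : S → ℝ≥0 and λ ∈ ℝ such that λ − û(s') + ǔ(s') ≤ x(s') for all s' and x(s) ≤ λ + ∑_{s'} (ǏP(s')·ǔ(s') − P̂(s')·û(s')). -/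
theorem dual_witnesses_exist
    (S : Type*) [Fintype S] (Pl Pu : S → ℝ) (x : S → ℝ) (xs : ℝ)
    (Padm : Set (S → ℝ))
    (hPadm : Padm = {P : S → ℝ | (∀ s', Pl s' ≤ P s' ∧ P s' ≤ Pu s') ∧ ∑ s', P s' = 1})
    (hne : Padm.Nonempty)
    (hmin : ∃ Pstar ∈ Padm, ∀ Q ∈ Padm, ∑ s', Pstar s' * x s' ≤ ∑ s', Q s' * x s')
    (hrobust : ∀ P ∈ Padm, xs ≤ ∑ s', P s' * x s') :
    ∃ uhat ucheck : S → ℝ, ∃ lam : ℝ,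
      (∀ s', 0 ≤ uhat s') ∧ (∀ s', 0 ≤ ucheck s') ∧
      (∀ s', lam - uhat s' + ucheck s' ≤ x s') ∧
      xs ≤ lam + ∑ s', (Pl s' * ucheck s' - Pu s' * uhat s') := by
  classical
  obtain ⟨Pstar, hPstar, hopt⟩ := hmin
  subst hPadm
  obtain ⟨hbd, hsum⟩ := hPstar
  -- S is nonempty
  haveI hSne : Nonempty S := by
    by_contra h
    rw [not_nonempty_iff] at h
    rw [Finset.univ_eq_empty, Finset.sum_empty] at hsum
    norm_num at hsum
  -- exchange argument
  have hexch : ∀ s t : S, Pl s < Pstar s → Pstar t < Pu t → x s ≤ x t := by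
    intro s t hs ht
    by_cases hst : s = t
    · subst hst; exact le_refl _
    set ε := min (Pstar s - Pl s) (Pu t - Pstar t) with hε
    have hεpos : 0 < ε := lt_min (by linarith) (by linarith)
    have hε1 : ε ≤ Pstar s - Pl s := min_le_left _ _
    have hε2 : ε ≤ Pu t - Pstar t := min_le_right _ _
    set Q : S → ℝ := fun s' =>
      Pstar s' + ε * ((if s' = t then 1 else 0) - (if s' = s then 1 else 0)) with hQ
    have hQbd : ∀ s', Pl s' ≤ Q s' ∧ Q s' ≤ Pu s' := by
      intro s'
      have hb1 := (hbd s').1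
      have hb2 := (hbd s').2
      have : Q s' = Pstar s' + ε * ((if s' = t then 1 else 0) - (if s' = s then 1 else 0)) := rfl
      rw [this]
      by_cases h1 : s' = t <;> by_cases h2 : s' = s
      · exact absurd (h2 ▸ h1) hst
      · rw [if_pos h1, if_neg h2]
        subst h1
        constructor <;> [linarith; linarith]
      · rw [if_neg h1, if_pos h2]
        subst h2
        constructor <;> [linarith; linarith]
      · rw [if_neg h1, if_neg h2]
        constructor <;> [linarith; linarith]
    have hQsum : ∑ s', Q s' = 1 := by
      simp only [hQ]
      rw [Finset.sum_add_distrib, ← Finset.mul_sum, Finset.sum_sub_distrib]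
      simp [Finset.sum_ite_eq', hsum]
    have hQval : ∑ s', Q s' * x s' = ∑ s', Pstar s' * x s' + ε * (x t - x s) := by
      simp only [hQ]
      have : ∀ s' : S, (Pstar s' + ε * ((if s' = t then 1 else 0) - (if s' = s then 1 else 0))) * x s'
          = Pstar s' * x s' + ε * ((if s' = t then x s' else 0) - (if s' = s then x s' else 0)) := by
        intro s'
        split_ifs <;> ring
      rw [Finset.sum_congr rfl (fun s' _ => this s')]
      rw [Finset.sum_add_distrib, ← Finset.mul_sum, Finset.sum_sub_distrib]
      simp [Finset.sum_ite_eq']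
    have hle := hopt Q ⟨hQbd, hQsum⟩
    rw [hQval] at hle
    have h0 : 0 ≤ ε * (x t - x s) := by linarith
    nlinarith
  -- construct the threshold lam
  have hlam : ∃ lam : ℝ, (∀ s', x s' < lam → Pstar s' = Pu s') ∧
      (∀ s', lam < x s' → Pstar s' = Pl s') := by
    by_cases hA : ∃ t, Pstar t < Pu t
    · obtain ⟨t, ht⟩ := hA
      obtain ⟨t0, ht0mem, ht0min⟩ :=
        Finset.exists_min_image (Finset.univ.filter fun t => Pstar t < Pu t) x
          ⟨t, by simp [ht]⟩
      have ht0 : Pstar t0 < Pu t0 := by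
        simpa using ht0mem
      refine ⟨x t0, ?_, ?_⟩
      · intro s' h
        by_contra hne'
        have hlt : Pstar s' < Pu s' := lt_of_le_of_ne (hbd s').2 hne'
        have := ht0min s' (by simp [hlt])
        linarith
      · intro s' h
        by_contra hne'
        have hlt : Pl s' < Pstar s' := lt_of_le_of_ne (hbd s').1 (Ne.symm hne')
        have := hexch s' t0 hlt ht0
        linarith
    · push_neg at hA
      obtain ⟨t0, _, ht0max⟩ :=
        Finset.exists_max_image Finset.univ x ⟨Classical.arbitrary S, Finset.mem_univ _⟩
      refine ⟨x t0, fun s' _ => le_antisymm (hbd s').2 (hA s'), fun s' h => ?_⟩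
      have := ht0max s' (Finset.mem_univ s')
      linarith
  obtain ⟨lam, H1, H2⟩ := hlam
  refine ⟨fun s' => max (lam - x s') 0, fun s' => max (x s' - lam) 0, lam,
    fun s' => le_max_right _ _, fun s' => le_max_right _ _, ?_, ?_⟩
  · intro s'
    dsimp only
    rcases le_total (x s') lam with h | h
    · rw [max_eq_left (by linarith : (0:ℝ) ≤ lam - x s'),
        max_eq_right (by linarith : x s' - lam ≤ 0)]
      linarith
    · rw [max_eq_right (by linarith : lam - x s' ≤ 0),
        max_eq_left (by linarith : (0:ℝ) ≤ x s' - lam)]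
      linarith
  · have e1 : ∀ s', Pstar s' * max (x s' - lam) 0 = Pl s' * max (x s' - lam) 0 := by
      intro s'
      rcases lt_or_ge lam (x s') with h | h
      · rw [H2 s' h]
      · rw [max_eq_right (by linarith : x s' - lam ≤ 0)]; ring
    have e2 : ∀ s', Pu s' * max (lam - x s') 0 = Pstar s' * max (lam - x s') 0 := by
      intro s'
      rcases lt_or_ge (x s') lam with h | h
      · rw [H1 s' h]
      · rw [max_eq_right (by linarith : lam - x s' ≤ 0)]; ring
    have key : ∑ s', Pstar s' * x s'
        = ∑ s', (lam * Pstar s' + (Pl s' * max (x s' - lam) 0 - Pu s' * max (lam - x s') 0)) := by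
      refine Finset.sum_congr rfl (fun s' _ => ?_)
      have hx : lam - max (lam - x s') 0 + max (x s' - lam) 0 = x s' := by
        rcases le_total (x s') lam with h | h
        · rw [max_eq_left (by linarith : (0:ℝ) ≤ lam - x s'),
            max_eq_right (by linarith : x s' - lam ≤ 0)]; ring
        · rw [max_eq_right (by linarith : lam - x s' ≤ 0),
            max_eq_left (by linarith : (0:ℝ) ≤ x s' - lam)]; ring
      linear_combination (-(Pstar s')) * hx + e1 s' + e2 s'
    have hfinal : ∑ s', Pstar s' * x s'
        = lam + ∑ s', (Pl s' * max (x s' - lam) 0 - Pu s' * max (lam - x s') 0) := by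
      rw [key, Finset.sum_add_distrib, ← Finset.mul_sum, hsum, mul_one]
    have := hrobust Pstar ⟨hbd, hsum⟩
    linarith [hfinal ▸ this]
end
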